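/- For (x,y) ∈ R_a with 0 < a ≤ 1/10, the identity (2T₃₃ − tr T̂)·r₁²r₂² = (x−2)(x+2)(x²y²+8x²y⁴−4+4y²) holds, where T = φ(x,y), T̂ is its bottom 2×2 block, tr T̂ = ω₊+ω₋. Consequently T₃₃ > (ω₊+ω₋)/2 when x < 2 and T₃₃ < (ω₊+ω₋)/2 when x > 2 (for (x,y) ∈ R_a). -/

import Mathlib

open Matrix

noncomputable def r1 (x y : ℝ) : ℝ := Real.sqrt (4 + x^2 + 4*x^2*y^2)
noncomputable def r2 (x y : ℝ) : ℝ := Real.sqrt (4 + 4*y^2 + x^2*y^2)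

noncomputable def phi (x y : ℝ) : Matrix (Fin 3) (Fin 3) ℝ :=
  ((r1 x y)^2 * (r2 x y)^2)⁻¹ •
    !![(4 - x^2) * (r2 x y)^2,  2*x*(r2 x y)^3,  0;
       2*x*(r2 x y)^3,  -4*(4 - x^2 - 4*x^2*y^4 + x^4*y^4),  2*y*(r1 x y)^3;
       0,  2*y*(r1 x y)^3,  y^2*(x^2 - 4)*(r1 x y)^2]

noncomputable def TX : Matrix (Fin 3) (Fin 3) ℝ := !![0,1,0;1,0,0;0,0,0]

noncomputable def Delta (x y : ℝ) : ℝ := ((x+2)^2 + 8*x^2*y^2) * ((x-2)^2 + 8*x^2*y^2)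
noncomputable def omegaP (x y : ℝ) : ℝ := (-4 + x^2 + Real.sqrt (Delta x y)) / (2*(r1 x y)^2)
noncomputable def omegaM (x y : ℝ) : ℝ := (-4 + x^2 - Real.sqrt (Delta x y)) / (2*(r1 x y)^2)

section PhiBlock

variable (x y : ℝ)

lemma r1_sq : r1 x y ^ 2 = 4 + x^2 + 4*x^2*y^2 := Real.sq_sqrt (by positivity)

lemma r2_sq : r2 x y ^ 2 = 4 + 4*y^2 + x^2*y^2 := Real.sq_sqrt (by positivity)

lemma r1_pos : 0 < r1 x y := Real.sqrt_pos.2 (by positivity)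

lemma r2_pos : 0 < r2 x y := Real.sqrt_pos.2 (by positivity)

lemma phi_one_one :
    phi x y 1 1 = -4*(4 - x^2 - 4*x^2*y^4 + x^4*y^4) / (r1 x y ^ 2 * r2 x y ^ 2) := by
  simp [phi, div_eq_inv_mul]

lemma phi_two_two : phi x y 2 2 = y^2*(x^2 - 4) / r2 x y ^ 2 := by
  have := (r1_pos x y).ne'
  simp only [phi, Matrix.smul_apply, of_apply, cons_val, smul_eq_mul]
  field_simp

lemma omegaP_add_omegaM : omegaP x y + omegaM x y = (x^2 - 4) / r1 x y ^ 2 := by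
  have := (r1_pos x y).ne'
  unfold omegaP omegaM
  field_simp
  ring

lemma two_mul_phi_two_two_sub_trace_mul :
    (2 * phi x y 2 2 - (phi x y 1 1 + phi x y 2 2)) * (r1 x y ^ 2 * r2 x y ^ 2)
      = (x - 2) * (x + 2) * (x^2*y^2 + 8*x^2*y^4 - 4 + 4*y^2) := by
  have := (r1_pos x y).ne'
  have := (r2_pos x y).ne'
  rw [phi_one_one, phi_two_two]
  field_simp
  rw [r1_sq]
  ring

/-- `T₃₃ - (ω₊ + ω₋)/2` factors with the same polynomial as the trace identity, since
`2 y² r₁² - r₂² = x²y² + 8x²y⁴ - 4 + 4y²`. -/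
lemma phi_two_two_sub_half_omega_sum :
    phi x y 2 2 - (omegaP x y + omegaM x y) / 2
      = (x - 2) * (x + 2) * (x^2*y^2 + 8*x^2*y^4 - 4 + 4*y^2)
          / (2 * r1 x y ^ 2 * r2 x y ^ 2) := by
  have := (r1_pos x y).ne'
  have := (r2_pos x y).ne'
  rw [phi_two_two, omegaP_add_omegaM, r1_sq, r2_sq]
  field_simp
  ring

end PhiBlock

lemma polynomial_neg_of_sq_le {x y : ℝ} (hx : x^2 ≤ 5) (hy : y^2 ≤ 1/100) :
    x^2*y^2 + 8*x^2*y^4 - 4 + 4*y^2 < 0 := by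
  nlinarith [sq_nonneg x, sq_nonneg y, mul_nonneg (sq_nonneg x) (sq_nonneg y)]

theorem stmt_14_general (a : ℝ) (ha : a ≤ 1/10) (x y : ℝ)
    (hx : 2 - a ≤ x ∧ x ≤ 2 + a) (hy : |y| ≤ a/10) :
    (2 * phi x y 2 2 - (phi x y 1 1 + phi x y 2 2)) * ((r1 x y)^2 * (r2 x y)^2)
      = (x - 2) * (x + 2) * (x^2*y^2 + 8*x^2*y^4 - 4 + 4*y^2) ∧
    (x < 2 → (omegaP x y + omegaM x y)/2 < phi x y 2 2) ∧
    (2 < x → phi x y 2 2 < (omegaP x y + omegaM x y)/2) := by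
  obtain ⟨hx_lo, hx_hi⟩ := hx
  have hN : x^2*y^2 + 8*x^2*y^4 - 4 + 4*y^2 < 0 := by
    refine polynomial_neg_of_sq_le (by nlinarith) ?_
    rw [← sq_abs]
    nlinarith [abs_nonneg y]
  have hden : 0 < 2 * r1 x y ^ 2 * r2 x y ^ 2 := by
    have := r1_pos x y; have := r2_pos x y; positivity
  have hxp : 0 < x + 2 := by linarith
  refine ⟨two_mul_phi_two_two_sub_trace_mul x y, fun hx2 => ?_, fun hx2 => ?_⟩
  · have : 0 < phi x y 2 2 - (omegaP x y + omegaM x y) / 2 := by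
      rw [phi_two_two_sub_half_omega_sum]
      exact div_pos (mul_pos_of_neg_of_neg (mul_neg_of_neg_of_pos (by linarith) hxp) hN) hden
    linarith
  · have : phi x y 2 2 - (omegaP x y + omegaM x y) / 2 < 0 := by
      rw [phi_two_two_sub_half_omega_sum]
      exact div_neg_of_neg_of_pos (mul_neg_of_pos_of_neg (by positivity) hN) hden
    linarith

theorem stmt_14 (a : ℝ) (ha0 : 0 < a) (ha : a ≤ 1/10) (x y : ℝ)
    (hx : 2 - a ≤ x ∧ x ≤ 2 + a) (hy : |y| ≤ a/10) :
    (2 * phi x y 2 2 - (phi x y 1 1 + phi x y 2 2)) * ((r1 x y)^2 * (r2 x y)^2)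
      = (x - 2) * (x + 2) * (x^2*y^2 + 8*x^2*y^4 - 4 + 4*y^2) ∧
    (x < 2 → (omegaP x y + omegaM x y)/2 < phi x y 2 2) ∧
    (2 < x → phi x y 2 2 < (omegaP x y + omegaM x y)/2) :=
  stmt_14_general a ha x y hx hy
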